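/- For symmetric real matrices X and Y of the same size and any positive integer k, tr((XY)^(2^k)) ≤ tr(X^(2^k) · Y^(2^k)). -/
import Mathlib

open Matrix

private lemma mul_pow_mul_aux {R : Type*} [Monoid R] (a b : R) (p : ℕ) :
    (a * b) ^ (p + 1) = a * ((b * a) ^ p * b) := by
  induction p with
  | zero => simp
  | succ p ih => rw [pow_succ, ih, pow_succ]; simp [mul_assoc]

private lemma trace_pow_mul_comm {n : ℕ} (X Y : Matrix (Fin n) (Fin n) ℝ) (p : ℕ) :
    Matrix.trace ((X * Y) ^ p) = Matrix.trace ((Y * X) ^ p) := by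
  cases p with
  | zero => simp
  | succ p =>
    rw [mul_pow_mul_aux, Matrix.trace_mul_comm, mul_assoc, ← pow_succ]

private lemma trace_mul_transpose_nonneg {n : ℕ} (M : Matrix (Fin n) (Fin n) ℝ) :
    0 ≤ Matrix.trace (M * Mᵀ) := by
  have h : Matrix.trace (M * Mᵀ) = ∑ i, ∑ j, (M i j) ^ 2 := by
    simp [Matrix.trace, Matrix.diag, Matrix.mul_apply, sq]
  rw [h]; positivity

private lemma trace_sq_le_trace_mul_transpose {n : ℕ} (M : Matrix (Fin n) (Fin n) ℝ) :
    Matrix.trace (M * M) ≤ Matrix.trace (M * Mᵀ) := by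
  have h := trace_mul_transpose_nonneg (M - Mᵀ)
  have e : (M - Mᵀ) * (M - Mᵀ)ᵀ = M * Mᵀ - M * M - Mᵀ * Mᵀ + Mᵀ * M := by
    rw [Matrix.transpose_sub, Matrix.transpose_transpose]
    noncomm_ring
  rw [e] at h
  have h1 : Matrix.trace (Mᵀ * Mᵀ) = Matrix.trace (M * M) := by
    rw [← Matrix.transpose_mul, Matrix.trace_transpose]
  have h2 : Matrix.trace (Mᵀ * M) = Matrix.trace (M * Mᵀ) := Matrix.trace_mul_comm _ _
  simp only [Matrix.trace_add, Matrix.trace_sub, h1, h2] at h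
  linarith

private lemma trace_symm_mul_le {n : ℕ} (S T : Matrix (Fin n) (Fin n) ℝ)
    (hS : S.IsSymm) (hT : T.IsSymm) :
    2 * Matrix.trace (S * T) ≤ Matrix.trace (S * S) + Matrix.trace (T * T) := by
  have h := trace_mul_transpose_nonneg (S - T)
  have e : (S - T)ᵀ = S - T := by rw [Matrix.transpose_sub, hS.eq, hT.eq]
  rw [e] at h
  have e2 : (S - T) * (S - T) = S * S - S * T - T * S + T * T := by noncomm_ring
  rw [e2] at h
  have h2 : Matrix.trace (T * S) = Matrix.trace (S * T) := Matrix.trace_mul_comm _ _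
  simp only [Matrix.trace_add, Matrix.trace_sub, h2] at h
  linarith

private lemma symm_sq {n : ℕ} {A : Matrix (Fin n) (Fin n) ℝ} (hA : A.IsSymm) :
    (A * A).IsSymm := by
  show (A * A)ᵀ = A * A
  rw [Matrix.transpose_mul, hA.eq]

private lemma symm_mul_transpose {n : ℕ} (C : Matrix (Fin n) (Fin n) ℝ) :
    (C * Cᵀ).IsSymm := by
  show (C * Cᵀ)ᵀ = C * Cᵀ
  rw [Matrix.transpose_mul, Matrix.transpose_transpose]

private lemma main_ind {n : ℕ} : ∀ k : ℕ,
    (∀ C : Matrix (Fin n) (Fin n) ℝ,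
      Matrix.trace (C ^ (2 ^ (k + 1))) ≤ Matrix.trace ((C * Cᵀ) ^ (2 ^ k))) ∧
    (∀ A B : Matrix (Fin n) (Fin n) ℝ, A.IsSymm → B.IsSymm →
      Matrix.trace ((A * B) ^ (2 ^ k)) ≤ Matrix.trace (A ^ (2 ^ k) * B ^ (2 ^ k))) := by
  intro k
  induction k with
  | zero =>
    constructor
    · intro C
      have : C ^ (2 ^ 1) = C * C := by rw [show (2:ℕ)^1 = 2 from rfl, sq]
      rw [this, pow_zero 2, pow_one]
      exact trace_sq_le_trace_mul_transpose C
    · intro A B hA hB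
      simp
  | succ k ih =>
    obtain ⟨Qk, Pk⟩ := ih
    have pow2 : ∀ M : Matrix (Fin n) (Fin n) ℝ, ∀ m : ℕ, M ^ (2 ^ (m + 1)) = (M * M) ^ (2 ^ m) := by
      intro M m
      rw [pow_succ 2 m, pow_mul', sq]
    -- key trace identity: tr((A*B*(B*A))^p) = tr((A*A*(B*B))^p)
    have Pk1 : ∀ A B : Matrix (Fin n) (Fin n) ℝ, A.IsSymm → B.IsSymm →
        Matrix.trace ((A * B) ^ (2 ^ (k + 1))) ≤
          Matrix.trace (A ^ (2 ^ (k + 1)) * B ^ (2 ^ (k + 1))) := by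
      intro A B hA hB
      have step1 : Matrix.trace ((A * B) ^ (2 ^ (k + 1))) ≤
          Matrix.trace ((A * B * (A * B)ᵀ) ^ (2 ^ k)) := Qk (A * B)
      have tAB : (A * B)ᵀ = B * A := by rw [Matrix.transpose_mul, hA.eq, hB.eq]
      have step2 : Matrix.trace ((A * B * (A * B)ᵀ) ^ (2 ^ k)) =
          Matrix.trace ((A * A * (B * B)) ^ (2 ^ k)) := by
        rw [tAB]
        have e1 : A * B * (B * A) = A * (B * (B * A)) := by rw [mul_assoc]
        rw [e1, trace_pow_mul_comm]
        have e2 : B * (B * A) * A = B * B * (A * A) := by noncomm_ring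
        rw [e2, trace_pow_mul_comm]
      have step3 : Matrix.trace ((A * A * (B * B)) ^ (2 ^ k)) ≤
          Matrix.trace ((A * A) ^ (2 ^ k) * (B * B) ^ (2 ^ k)) :=
        Pk _ _ (symm_sq hA) (symm_sq hB)
      have step4 : (A * A) ^ (2 ^ k) = A ^ (2 ^ (k + 1)) := (pow2 A k).symm
      have step5 : (B * B) ^ (2 ^ k) = B ^ (2 ^ (k + 1)) := (pow2 B k).symm
      calc Matrix.trace ((A * B) ^ (2 ^ (k + 1)))
          ≤ Matrix.trace ((A * B * (A * B)ᵀ) ^ (2 ^ k)) := step1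
        _ = Matrix.trace ((A * A * (B * B)) ^ (2 ^ k)) := step2
        _ ≤ Matrix.trace ((A * A) ^ (2 ^ k) * (B * B) ^ (2 ^ k)) := step3
        _ = Matrix.trace (A ^ (2 ^ (k + 1)) * B ^ (2 ^ (k + 1))) := by rw [step4, step5]
    refine ⟨?_, Pk1⟩
    intro C
    set S := C * Cᵀ with hSdef
    set T := Cᵀ * C with hTdef
    have hS : S.IsSymm := symm_mul_transpose C
    have hT : T.IsSymm := by
      show Tᵀ = T
      rw [hTdef, Matrix.transpose_mul, Matrix.transpose_transpose]
    have step1 : Matrix.trace (C ^ (2 ^ (k + 2))) =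
        Matrix.trace ((C * C) ^ (2 ^ (k + 1))) := by rw [pow2]
    have step2 : Matrix.trace ((C * C) ^ (2 ^ (k + 1))) ≤
        Matrix.trace ((C * C * (C * C)ᵀ) ^ (2 ^ k)) := Qk (C * C)
    have step3 : Matrix.trace ((C * C * (C * C)ᵀ) ^ (2 ^ k)) =
        Matrix.trace ((S * T) ^ (2 ^ k)) := by
      have e1 : C * C * (C * C)ᵀ = C * (C * Cᵀ * Cᵀ) := by
        rw [Matrix.transpose_mul]; noncomm_ring
      rw [e1, trace_pow_mul_comm]
      have e2 : C * Cᵀ * Cᵀ * C = S * T := by rw [hSdef, hTdef]; noncomm_ring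
      rw [e2]
    have step4 : Matrix.trace ((S * T) ^ (2 ^ k)) ≤
        Matrix.trace (S ^ (2 ^ k) * T ^ (2 ^ k)) := Pk S T hS hT
    have hSp : (S ^ (2 ^ k)).IsSymm := by
      show (S ^ (2 ^ k))ᵀ = S ^ (2 ^ k)
      rw [Matrix.transpose_pow, hS.eq]
    have hTp : (T ^ (2 ^ k)).IsSymm := by
      show (T ^ (2 ^ k))ᵀ = T ^ (2 ^ k)
      rw [Matrix.transpose_pow, hT.eq]
    have step5 := trace_symm_mul_le (S ^ (2 ^ k)) (T ^ (2 ^ k)) hSp hTp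
    have eS : S ^ (2 ^ k) * S ^ (2 ^ k) = S ^ (2 ^ (k + 1)) := by
      rw [← pow_add, pow_succ 2 k, mul_two]
    have eT : T ^ (2 ^ k) * T ^ (2 ^ k) = T ^ (2 ^ (k + 1)) := by
      rw [← pow_add, pow_succ 2 k, mul_two]
    rw [eS, eT] at step5
    have eST : Matrix.trace (T ^ (2 ^ (k + 1))) = Matrix.trace (S ^ (2 ^ (k + 1))) := by
      rw [hSdef, hTdef]; exact trace_pow_mul_comm Cᵀ C _
    rw [eST] at step5
    have : Matrix.trace (S ^ (2 ^ k) * T ^ (2 ^ k)) ≤ Matrix.trace (S ^ (2 ^ (k + 1))) := by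
      linarith
    calc Matrix.trace (C ^ (2 ^ (k + 1 + 1)))
        = Matrix.trace ((C * C) ^ (2 ^ (k + 1))) := step1
      _ ≤ Matrix.trace ((C * C * (C * C)ᵀ) ^ (2 ^ k)) := step2
      _ = Matrix.trace ((S * T) ^ (2 ^ k)) := step3
      _ ≤ Matrix.trace (S ^ (2 ^ k) * T ^ (2 ^ k)) := step4
      _ ≤ Matrix.trace (S ^ (2 ^ (k + 1))) := this
      _ = Matrix.trace ((C * Cᵀ) ^ (2 ^ (k + 1))) := by rw [hSdef]

theorem trace_mul_pow_two_pow_le {n : ℕ} (X Y : Matrix (Fin n) (Fin n) ℝ)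
    (hX : X.IsSymm) (hY : Y.IsSymm) (k : ℕ) (hk : 0 < k) :
    Matrix.trace ((X * Y) ^ (2 ^ k)) ≤ Matrix.trace (X ^ (2 ^ k) * Y ^ (2 ^ k)) :=
  (main_ind k).2 X Y hX hY
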